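/- Let F be a Fell bundle on a groupoid G and x ∈ G. If T : F|_{G^{s(x)}} → F|_{G^{r(x)}} is a multiplier of order x, then the adjoint map T* : F|_{G^{r(x)}} → F|_{G^{s(x)}} satisfying e*Tf = (T*e)*f for all e ∈ F|_{G^{r(x)}}, f ∈ F|_{G^{s(x)}} is uniquely determined, T* is a multiplier of order x⁻¹, and T** = T. -/
import Mathlib


open CategoryTheory

/-- A (algebraic) Fell bundle on a groupoid `C`.  An element `x` of the groupoid with
source `a` and range `b` is a morphism `x : a ⟶ b`; the groupoid product `x·y` (for
`s(x) = r(y)`) is `y ≫ x`, and `x⁻¹ = Groupoid.inv x`.  The bundle assigns to each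
element a Banach space fiber, with a multiplication `F_x × F_y → F_{xy}` and an
involution `F_x → F_{x⁻¹}`. -/
structure FellBundle (C : Type*) [Groupoid C] where
  Fib : ∀ {a b : C}, (a ⟶ b) → Type*
  normed : ∀ {a b : C} (x : a ⟶ b), NormedAddCommGroup (Fib x)
  smulC : ∀ {a b : C} (x : a ⟶ b), NormedSpace ℂ (Fib x)
  mul : ∀ {a b c : C} {x : a ⟶ b} {y : c ⟶ a}, Fib x → Fib y → Fib (y ≫ x)
  star : ∀ {a b : C} {x : a ⟶ b}, Fib x → Fib (Groupoid.inv x)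

attribute [instance] FellBundle.normed FellBundle.smulC

/-- A multiplier of order `x : a ⟶ b` of a Fell bundle `F`: a map
`T : F|_{G^{s(x)}} → F|_{G^{r(x)}}` with `T F_y ⊆ F_{xy}` for all `y ∈ G^{s(x)}`,
admitting an adjoint map `adj : F|_{G^{r(x)}} → F|_{G^{s(x)}}` with
`e* (Tf) = (adj e)* f` for all `e ∈ F|_{G^{r(x)}}`, `f ∈ F|_{G^{s(x)}}` (the equation is
between elements of propositionally equal fibers, hence stated with `HEq`). -/
structure FellMultiplier {C : Type*} [Groupoid C] (F : FellBundle C)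
    {a b : C} (x : a ⟶ b) where
  toFun : ∀ {c : C} (y : c ⟶ a), F.Fib y → F.Fib (y ≫ x)
  adj : ∀ {c : C} (z : c ⟶ b), F.Fib z → F.Fib (z ≫ Groupoid.inv x)
  adj_spec : ∀ {c c' : C} (z : c' ⟶ b) (y : c ⟶ a) (e : F.Fib z) (f : F.Fib y),
    HEq (F.mul (F.star e) (toFun y f)) (F.mul (F.star (adj z e)) f)


section Aux

variable {C : Type*} [Groupoid C] (F : FellBundle C)

/-- Congruence for `star` across propositionally equal fibers. -/
theorem FellBundle.star_congr {a b : C} {p q : a ⟶ b} (h : p = q)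
    {u : F.Fib p} {v : F.Fib q} (huv : HEq u v) : HEq (F.star u) (F.star v) := by
  subst h; cases huv; rfl

/-- Congruence for `mul` across propositionally equal fibers. -/
theorem FellBundle.mul_congr {a b c : C} {p p' : a ⟶ b} {q q' : c ⟶ a}
    (hp : p = p') (hq : q = q') {u : F.Fib p} {u' : F.Fib p'}
    {v : F.Fib q} {v' : F.Fib q'} (hu : HEq u u') (hv : HEq v v') :
    HEq (F.mul u v) (F.mul u' v') := by
  subst hp; subst hq; cases hu; cases hv; rfl

end Aux

/-- Let `F` be a Fell bundle on a groupoid `G` and `x ∈ G`.  If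
`T : F|_{G^{s(x)}} → F|_{G^{r(x)}}` is a multiplier of order `x`, then the adjoint map
`T*` satisfying `e* Tf = (T*e)* f` is uniquely determined, `T*` is a multiplier of order
`x⁻¹`, and `T** = T`. -/
theorem stmt5 {C : Type*} [Groupoid C] (F : FellBundle C)
    -- C*-axioms of the Fell bundle used in the proof:
    (hCnorm : ∀ {a b : C} {y : a ⟶ b} (e : F.Fib y), ‖F.mul (F.star e) e‖ = ‖e‖ ^ 2)
    (hstar_mul : ∀ {a b c : C} {x : a ⟶ b} {y : c ⟶ a} (e : F.Fib x) (f : F.Fib y),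
      HEq (F.star (F.mul e f)) (F.mul (F.star f) (F.star e)))
    (hstar_star : ∀ {a b : C} {x : a ⟶ b} (e : F.Fib x), HEq (F.star (F.star e)) e)
    (hstar_add : ∀ {a b : C} {x : a ⟶ b} (e f : F.Fib x),
      F.star (e + f) = F.star e + F.star f)
    (hmul_addl : ∀ {a b c : C} {x : a ⟶ b} {y : c ⟶ a} (e e' : F.Fib x) (f : F.Fib y),
      F.mul (e + e') f = F.mul e f + F.mul e' f)
    (hmul_addr : ∀ {a b c : C} {x : a ⟶ b} {y : c ⟶ a} (e : F.Fib x) (f f' : F.Fib y),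
      F.mul e (f + f') = F.mul e f + F.mul e f')
    {a b : C} (x : a ⟶ b) :
    -- uniqueness of the adjoint
    (∀ T₁ T₂ : FellMultiplier F x,
      (∀ (c : C) (y : c ⟶ a) (f : F.Fib y), T₁.toFun y f = T₂.toFun y f) →
      ∀ (c : C) (z : c ⟶ b) (e : F.Fib z), T₁.adj z e = T₂.adj z e) ∧
    -- T* is a multiplier of order x⁻¹, and T** = T
    (∀ T : FellMultiplier F x, ∃ S : FellMultiplier F (Groupoid.inv x),
      (∀ (c : C) (z : c ⟶ b) (e : F.Fib z), S.toFun z e = T.adj z e) ∧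
      (∀ (c : C) (y : c ⟶ a) (f : F.Fib y), HEq (S.adj y f) (T.toFun y f))) := by
  have hinv : Groupoid.inv (Groupoid.inv x) = x := by simp [Groupoid.inv_eq_inv]
  constructor
  · -- uniqueness of the adjoint
    intro T₁ T₂ h c z e
    set d₁ := T₁.adj z e with hd₁
    set d₂ := T₂.adj z e with hd₂
    -- the key: (d₁)* f = (d₂)* f for every f
    have key : ∀ {c' : C} (y : c' ⟶ a) (f : F.Fib y),
        F.mul (F.star d₁) f = F.mul (F.star d₂) f := by
      intro c' y f
      have h1 := T₁.adj_spec z y e f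
      have h2 := T₂.adj_spec z y e f
      rw [h c' y f] at h1
      exact eq_of_heq (h1.symm.trans h2)
    -- star and mul preserve subtraction
    have hstar_sub : ∀ {a' b' : C} {w : a' ⟶ b'} (u v : F.Fib w),
        F.star (u - v) = F.star u - F.star v := by
      intro a' b' w u v
      have : F.star (v + (u - v)) = F.star v + F.star (u - v) := hstar_add v (u - v)
      rw [add_sub_cancel] at this
      rw [eq_sub_iff_add_eq, add_comm, ← this]
    have hmul_subl : ∀ {a' b' c'' : C} {w : a' ⟶ b'} {y : c'' ⟶ a'}
        (u v : F.Fib w) (f : F.Fib y),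
        F.mul (u - v) f = F.mul u f - F.mul v f := by
      intro a' b' c'' w y u v f
      have : F.mul (v + (u - v)) f = F.mul v f + F.mul (u - v) f := hmul_addl v (u - v) f
      rw [add_sub_cancel] at this
      rw [eq_sub_iff_add_eq, add_comm, ← this]
    have hzero : F.mul (F.star (d₁ - d₂)) (d₁ - d₂) = 0 := by
      rw [hstar_sub, hmul_subl, key (z ≫ Groupoid.inv x) (d₁ - d₂), sub_self]
    have hnorm := hCnorm (d₁ - d₂)
    rw [hzero, norm_zero] at hnorm
    have : d₁ - d₂ = 0 := by
      have := (pow_eq_zero_iff (n := 2) (by norm_num)).mp hnorm.symm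
      exact norm_eq_zero.mp this
    have := sub_eq_zero.mp this
    rw [hd₁, hd₂] at this
    exact this
  · -- T* is a multiplier of order x⁻¹ with T** = T
    intro T
    have hcast : ∀ {c : C} (y : c ⟶ a),
        F.Fib (y ≫ x) = F.Fib (y ≫ Groupoid.inv (Groupoid.inv x)) := by
      intro c y; rw [hinv]
    refine ⟨⟨fun {c} z e => T.adj z e, fun {c} y f => cast (hcast y) (T.toFun y f), ?_⟩,
      fun c z e => rfl, fun c y f => cast_heq _ _⟩
    intro c c' z y e f
    -- here z : c' ⟶ a, y : c ⟶ b, e : F.Fib z, f : F.Fib y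
    -- goal: HEq (F.mul (F.star e) (T.adj y f)) (F.mul (F.star (cast _ (T.toFun z e))) f)
    have spec := T.adj_spec y z f e
    -- spec : HEq (F.mul (F.star f) (T.toFun z e)) (F.mul (F.star (T.adj y f)) e)
    have hmor1 : (z ≫ x) ≫ Groupoid.inv y = z ≫ Groupoid.inv (y ≫ Groupoid.inv x) := by
      simp [Groupoid.inv_eq_inv]
    have lhs1 : HEq (F.star (F.mul (F.star f) (T.toFun z e)))
        (F.mul (F.star (T.toFun z e)) f) := by
      refine (hstar_mul (F.star f) (T.toFun z e)).trans ?_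
      exact F.mul_congr rfl (by simp [Groupoid.inv_eq_inv]) HEq.rfl (hstar_star f)
    have rhs1 : HEq (F.star (F.mul (F.star (T.adj y f)) e))
        (F.mul (F.star e) (T.adj y f)) := by
      refine (hstar_mul (F.star (T.adj y f)) e).trans ?_
      exact F.mul_congr rfl (by simp [Groupoid.inv_eq_inv]) HEq.rfl (hstar_star (T.adj y f))
    have hstarspec := F.star_congr hmor1 spec
    -- combine: mul (star e) (T.adj y f) = star(rhs) = star(lhs) = mul (star (toFun z e)) f
    have main : HEq (F.mul (F.star e) (T.adj y f)) (F.mul (F.star (T.toFun z e)) f) :=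
      rhs1.symm.trans (hstarspec.symm.trans lhs1)
    refine main.trans ?_
    exact F.mul_congr (by rw [hinv]) rfl
      (F.star_congr (by rw [hinv]) (cast_heq _ _).symm) HEq.rfl
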